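/- Let l be a positive integer, φ₁, φ₂ ≥ 0 with φ₁ + φ₂ < π. Suppose â_α : ℝⁿ → ℂ are bounded functions for each multi-index α with |α| ≤ l, and set L(ξ) = Σ_{|α| ≤ l} â_α(ξ)(iξ)^α. Assume L(ξ) ∈ S_{φ₁} for all ξ, and there is c > 0 with |L(ξ)| ≥ c Σ_{k=1}^n |ξ_k|^l for all ξ ∈ ℝⁿ. Then the function σ₂(ξ, λ) = Σ_{|α| ≤ l} |λ|^{1 − |α|/l} â_α(ξ)(iξ)^α (L(ξ) + λ)^{−1} is uniformly bounded: there is C > 0 with |σ₂(ξ, λ)| ≤ C for all ξ ∈ ℝⁿ and all nonzero λ ∈ S_{φ₂}. -/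

import Mathlib

open Complex

/-- The closed sector of half-angle `φ` around the positive real axis, including `0`. -/
def sector (φ : ℝ) : Set ℂ := {w : ℂ | w = 0 ∨ |w.arg| ≤ φ}

/-- `(i ξ)^α` for a real variable `ξ` and a nonnegative exponent `α`,
with the convention `0 ^ 0 = 1` and `0 ^ α = 0` for `α > 0`. -/
noncomputable def ixpow (ξ : ℝ) (α : ℝ) : ℂ :=
  if ξ = 0 then (if α = 0 then 1 else 0)
  else Complex.exp (α * (Real.log |ξ| + Complex.I * (Real.pi / 2) * Real.sign ξ))

/-! Each term of `σ₂` is bounded on its own. Since `|ξₖ| ≤ (∑ⱼ |ξⱼ|^l)^(1/l)`, weighted AM–GM gives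
`|λ|^(1-|α|/l) |ξ^α| ≤ |λ| + ∑ₖ |ξₖ|^l ≤ (1 + 1/c) (|L ξ| + |λ|)`. As `L ξ` and `λ` lie in sectors
of total opening `φ₁ + φ₂ < π`, the law of cosines gives `m (|L ξ| + |λ|) ≤ |L ξ + λ|` with
`m² = (1 + cos (φ₁ + φ₂)) / 2 > 0`, which absorbs the resolvent `(L ξ + λ)⁻¹`. -/

theorem norm_ixpow_natCast (ξ : ℝ) (k : ℕ) : ‖ixpow ξ k‖ = |ξ| ^ k := by
  by_cases hξ : ξ = 0
  · rcases eq_or_ne k 0 with rfl | hk <;> simp [ixpow, *]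
  · simp [ixpow, hξ, Complex.norm_exp, ← Real.rpow_natCast, Real.rpow_def_of_pos (abs_pos.2 hξ),
      mul_comm]

theorem norm_add_sq_eq_cos_arg_sub (z w : ℂ) :
    ‖z + w‖ ^ 2 = ‖z‖ ^ 2 + ‖w‖ ^ 2 + 2 * (‖z‖ * ‖w‖) * Real.cos (arg z - arg w) := by
  have hre : ‖z‖ * ‖w‖ * Real.cos (arg z - arg w) = z.re * w.re + z.im * w.im := by
    rw [Real.cos_sub, ← norm_mul_cos_arg z, ← norm_mul_cos_arg w, ← norm_mul_sin_arg z,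
      ← norm_mul_sin_arg w]
    ring
  rw [mul_assoc, hre, Complex.sq_norm, Complex.sq_norm, Complex.sq_norm, normSq_add]
  simp only [mul_re, conj_re, conj_im]
  ring

theorem exists_pos_mul_norm_add_le_norm_add_of_mem_sector {φ₁ φ₂ : ℝ} (hφ : φ₁ + φ₂ < Real.pi) :
    ∃ m > 0, ∀ z ∈ sector φ₁, ∀ w ∈ sector φ₂, m * (‖z‖ + ‖w‖) ≤ ‖z + w‖ := by
  set ψ := max (φ₁ + φ₂) 0
  have hψ : ψ < Real.pi := max_lt hφ Real.pi_pos
  set c₀ := Real.cos ψ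
  have hc₀ : -1 < c₀ := by
    simpa using Real.cos_lt_cos_of_nonneg_of_le_pi (le_max_right _ _) le_rfl hψ
  refine ⟨√((1 + c₀) / 2), Real.sqrt_pos.2 (by linarith), fun z hz w hw => ?_⟩
  have hcos : ‖z‖ * ‖w‖ * c₀ ≤ ‖z‖ * ‖w‖ * Real.cos (arg z - arg w) := by
    rcases hz with rfl | hz
    · simp
    rcases hw with rfl | hw
    · simp
    refine mul_le_mul_of_nonneg_left ?_ (by positivity)
    rw [← Real.cos_abs (arg z - arg w)]
    refine Real.cos_le_cos_of_nonneg_of_le_pi (abs_nonneg _) hψ.le ?_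
    calc |arg z - arg w| ≤ |arg z| + |arg w| := abs_sub _ _
      _ ≤ ψ := (add_le_add hz hw).trans (le_max_left _ _)
  refine (pow_le_pow_iff_left₀ (by positivity) (norm_nonneg _) two_ne_zero).1 ?_
  calc (√((1 + c₀) / 2) * (‖z‖ + ‖w‖)) ^ 2 = (1 + c₀) / 2 * (‖z‖ + ‖w‖) ^ 2 := by
        rw [mul_pow, Real.sq_sqrt (by linarith)]
    _ ≤ ‖z‖ ^ 2 + ‖w‖ ^ 2 + 2 * (‖z‖ * ‖w‖) * c₀ := by
        nlinarith [sq_nonneg (‖z‖ - ‖w‖), Real.cos_le_one ψ]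
    _ ≤ ‖z + w‖ ^ 2 := by rw [norm_add_sq_eq_cos_arg_sub]; linarith

theorem prod_abs_pow_le_sum_pow_rpow {ι : Type*} [Fintype ι] {l : ℕ} (hl : l ≠ 0) (ξ : ι → ℝ)
    (α : ι → ℕ) : ∏ k, |ξ k| ^ α k ≤ (∑ k, |ξ k| ^ l) ^ ((∑ k, (α k : ℝ)) / l) := by
  set S := ∑ k, |ξ k| ^ l
  have hS : 0 ≤ S := by positivity
  have hξS : ∀ k, |ξ k| ≤ S ^ (l⁻¹ : ℝ) := fun k => by
    rw [← Real.pow_rpow_inv_natCast (abs_nonneg (ξ k)) hl]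
    exact Real.rpow_le_rpow (by positivity)
      (Finset.single_le_sum (f := fun i => |ξ i| ^ l) (fun i _ => by positivity)
        (Finset.mem_univ k)) (by positivity)
  calc ∏ k, |ξ k| ^ α k ≤ ∏ k, (S ^ (l⁻¹ : ℝ)) ^ α k :=
        Finset.prod_le_prod (fun k _ => by positivity)
          (fun k _ => pow_le_pow_left₀ (abs_nonneg _) (hξS k) _)
    _ = S ^ ((∑ k, (α k : ℝ)) / l) := by
        rw [Finset.prod_pow_eq_pow_sum, ← Real.rpow_natCast, ← Real.rpow_mul hS, Nat.cast_sum,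
          div_eq_inv_mul]

theorem rpow_mul_prod_abs_pow_le_add {ι : Type*} [Fintype ι] {l : ℕ} (hl : l ≠ 0) (ξ : ι → ℝ)
    {α : ι → ℕ} (hα : ∑ k, α k ≤ l) {t : ℝ} (ht : 0 ≤ t) :
    t ^ (1 - (∑ k, (α k : ℝ)) / l) * ∏ k, |ξ k| ^ α k ≤ t + ∑ k, |ξ k| ^ l := by
  set θ := (∑ k, (α k : ℝ)) / l
  have hθ₀ : 0 ≤ θ := by positivity
  have hθ₁ : θ ≤ 1 := by
    rw [div_le_one (by positivity)]
    exact_mod_cast hα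
  calc t ^ (1 - θ) * ∏ k, |ξ k| ^ α k ≤ t ^ (1 - θ) * (∑ k, |ξ k| ^ l) ^ θ :=
        mul_le_mul_of_nonneg_left (prod_abs_pow_le_sum_pow_rpow hl ξ α) (by positivity)
    _ ≤ (1 - θ) * t + θ * ∑ k, |ξ k| ^ l :=
        Real.geom_mean_le_arith_mean2_weighted (by linarith) hθ₀ ht (by positivity) (by ring)
    _ ≤ t + ∑ k, |ξ k| ^ l := by nlinarith [show 0 ≤ ∑ k, |ξ k| ^ l by positivity]

theorem norm_ofReal_mul_mul_mul_inv_le {r B K : ℝ} {a P z : ℂ} (hr : 0 ≤ r) (ha : ‖a‖ ≤ B)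
    (hz : z ≠ 0) (h : r * ‖P‖ ≤ K * ‖z‖) : ‖(r : ℂ) * a * P * z⁻¹‖ ≤ B * K := by
  have hz' : 0 < ‖z‖ := norm_pos_iff.2 hz
  rw [norm_mul, norm_mul, norm_mul, norm_inv, norm_real, Real.norm_of_nonneg hr,
    ← div_eq_mul_inv, div_le_iff₀ hz']
  calc r * ‖a‖ * ‖P‖ = ‖a‖ * (r * ‖P‖) := by ring
    _ ≤ B * (K * ‖z‖) := mul_le_mul ha h (by positivity) ((norm_nonneg a).trans ha)
    _ = B * K * ‖z‖ := by ring

theorem sigma_two_uniform_bound_general (n l : ℕ) (hl : 0 < l) (φ₁ φ₂ : ℝ)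
    (hφ : φ₁ + φ₂ < Real.pi)
    (a : (Fin n → Fin (l + 1)) → (Fin n → ℝ) → ℂ)
    (ha : ∀ α, ∃ B, ∀ ξ, ‖a α ξ‖ ≤ B)
    (L : (Fin n → ℝ) → ℂ)
    (hLsec : ∀ ξ, L ξ ∈ sector φ₁)
    (c : ℝ) (hc : 0 < c)
    (hLlow : ∀ ξ : Fin n → ℝ, c * ∑ k, |ξ k| ^ l ≤ ‖L ξ‖) :
    ∃ C > 0, ∀ (lam : ℂ), lam ∈ sector φ₂ → lam ≠ 0 → ∀ ξ : Fin n → ℝ,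
      ‖(∑ α ∈ Finset.univ.filter (fun α : Fin n → Fin (l + 1) => ∑ k, (α k : ℕ) ≤ l),
          ((‖lam‖ ^ (1 - (∑ k, (α k : ℕ) : ℝ) / l) : ℝ) : ℂ) *
            a α ξ * (∏ k, ixpow (ξ k) (α k : ℕ)) * (L ξ + lam)⁻¹)‖ ≤ C := by
  obtain ⟨m, hm, hsec⟩ := exists_pos_mul_norm_add_le_norm_add_of_mem_sector hφ
  choose B hB using ha
  have hB₀ : ∀ α, 0 ≤ B α := fun α => (norm_nonneg _).trans (hB α 0)
  set F := Finset.univ.filter (fun α : Fin n → Fin (l + 1) => ∑ k, (α k : ℕ) ≤ l)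
  set K := (1 + c⁻¹) / m
  refine ⟨∑ α ∈ F, B α * K + 1,
    add_pos_of_nonneg_of_pos (Finset.sum_nonneg fun α _ => mul_nonneg (hB₀ α) (by positivity))
      one_pos, fun lam hlam hlam₀ ξ => ?_⟩
  have hres : ‖lam‖ + ∑ k, |ξ k| ^ l ≤ K * ‖L ξ + lam‖ := by
    have hS : ∑ k, |ξ k| ^ l ≤ c⁻¹ * ‖L ξ‖ := by
      rw [inv_mul_eq_div, le_div_iff₀ hc, mul_comm]; exact hLlow ξ
    calc ‖lam‖ + ∑ k, |ξ k| ^ l ≤ (1 + c⁻¹) * (‖L ξ‖ + ‖lam‖) := by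
          nlinarith [norm_nonneg (L ξ), norm_nonneg lam, inv_pos.2 hc]
      _ ≤ K * ‖L ξ + lam‖ := by
          rw [div_mul_eq_mul_div, le_div_iff₀ hm, mul_assoc]
          exact mul_le_mul_of_nonneg_left (by linarith [hsec _ (hLsec ξ) _ hlam]) (by positivity)
  have hz : L ξ + lam ≠ 0 := by
    rintro hz
    rw [hz, norm_zero, mul_zero] at hres
    linarith [norm_pos_iff.2 hlam₀, show 0 ≤ ∑ k, |ξ k| ^ l by positivity]
  refine (norm_sum_le _ _).trans (Finset.sum_le_sum fun α hα => ?_) |>.trans (lt_add_one _).le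
  refine norm_ofReal_mul_mul_mul_inv_le (by positivity) (hB α ξ) hz (le_trans ?_ hres)
  simpa [norm_prod, norm_ixpow_natCast] using
    rpow_mul_prod_abs_pow_le_add hl.ne' ξ (Finset.mem_filter.1 hα).2 (norm_nonneg lam)

theorem sigma_two_uniform_bound (n l : ℕ) (hl : 0 < l) (φ₁ φ₂ : ℝ)
    (hφ₁ : 0 ≤ φ₁) (hφ₂ : 0 ≤ φ₂) (hφ : φ₁ + φ₂ < Real.pi)
    (a : (Fin n → Fin (l + 1)) → (Fin n → ℝ) → ℂ)
    (ha : ∀ α, ∃ B, ∀ ξ, ‖a α ξ‖ ≤ B)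
    (L : (Fin n → ℝ) → ℂ)
    (hLdef : ∀ ξ, L ξ =
      ∑ α ∈ Finset.univ.filter (fun α : Fin n → Fin (l + 1) => ∑ k, (α k : ℕ) ≤ l),
        a α ξ * ∏ k, ixpow (ξ k) (α k : ℕ))
    (hLsec : ∀ ξ, L ξ ∈ sector φ₁)
    (c : ℝ) (hc : 0 < c)
    (hLlow : ∀ ξ : Fin n → ℝ, c * ∑ k, |ξ k| ^ l ≤ ‖L ξ‖) :
    ∃ C > 0, ∀ (lam : ℂ), lam ∈ sector φ₂ → lam ≠ 0 → ∀ ξ : Fin n → ℝ,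
      ‖(∑ α ∈ Finset.univ.filter (fun α : Fin n → Fin (l + 1) => ∑ k, (α k : ℕ) ≤ l),
          ((‖lam‖ ^ (1 - (∑ k, (α k : ℕ) : ℝ) / l) : ℝ) : ℂ) *
            a α ξ * (∏ k, ixpow (ξ k) (α k : ℕ)) * (L ξ + lam)⁻¹)‖ ≤ C :=
  sigma_two_uniform_bound_general n l hl φ₁ φ₂ hφ a ha L hLsec c hc hLlow
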